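/- A vector field u ∈ L²_vec(ν) is orthogonal to L²_∇(ν) if and only if its divergence vanishes ν-almost surely, i.e., (Lu)(κ) := Σ_{b∈B} [κ_b u(κ,b) - (τ_{-b}κ)_b u(τ_{-b}κ, b)] = 0 for ν-a.e. κ. -/

import Mathlib

open MeasureTheory Real Filter ProbabilityTheory
open scoped ENNReal

noncomputable section

variable {d : ℕ}
/-- Positively oriented edges of `ℤ^d`: a base point together with a direction. -/
abbrev EdgeZ (d : ℕ) := ((Fin d → ℤ) × Fin d)

/-- Configurations indexed by (positively oriented) edges: gradients or conductances. -/
abbrev Cfg (d : ℕ) := EdgeZ d → ℝ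

/-- `sv j n` is `n` times the `j`-th coordinate unit vector of `ℤ^d`. -/
def sv (j : Fin d) (n : ℤ) : Fin d → ℤ := fun i => if i = j then n else 0

/-- Shift of a configuration by a lattice vector `x`. -/
def shf (x : Fin d → ℤ) (κ : Cfg d) : Cfg d := fun e => κ (e.1 + x, e.2)

/-- Translation invariance of a measure on configurations. -/
def TInv (ν : Measure (Cfg d)) : Prop := ∀ x, ν.map (shf x) = ν

/-- Ergodicity with respect to the group of lattice shifts. -/
def Erg (ν : Measure (Cfg d)) : Prop :=
  ∀ A : Set (Cfg d), MeasurableSet A → (∀ x, shf x ⁻¹' A = A) → ν A = 0 ∨ ν A = 1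

/-- Uniform ellipticity: `ε ≤ κ_b ≤ 1/ε` almost surely. -/
def Elliptic (ν : Measure (Cfg d)) : Prop :=
  ∃ ε : ℝ, 0 < ε ∧ ∀ᵐ κ ∂ν, ∀ e, ε ≤ κ e ∧ κ e ≤ 1 / ε
/-- A local function of the environment: depends on finitely many edges. -/
def IsLocal (h : Cfg d → ℝ) : Prop :=
  ∃ S : Finset (EdgeZ d), ∀ κ κ' : Cfg d, (∀ e ∈ S, κ e = κ' e) → h κ = h κ'

/-- The gradient `(∇h)_j = h ∘ τ_{ê_j} - h` of a function of the environment. -/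
def grad (h : Cfg d → ℝ) : Cfg d → Fin d → ℝ :=
  fun κ j => h (shf (sv j 1) κ) - h κ

/-- The `L²_vec(ν)` inner product `(u,v) = E_ν[Σ_b κ_b u(κ,b) v(κ,b)]`. -/
def ivec (ν : Measure (Cfg d)) (u v : Cfg d → Fin d → ℝ) : ℝ :=
  ∫ κ, ∑ j, κ (0, j) * u κ j * v κ j ∂ν

/-- Square integrability with respect to `ν`. -/
def SqInt (ν : Measure (Cfg d)) (h : Cfg d → ℝ) : Prop :=
  ∫⁻ κ, ENNReal.ofReal ((h κ) ^ 2) ∂ν < ⊤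

/-- Membership in `L²_vec(ν)`: measurable components, each square integrable. -/
def MemL2vec (ν : Measure (Cfg d)) (u : Cfg d → Fin d → ℝ) : Prop :=
  (∀ j, Measurable fun κ => u κ j) ∧ ∀ j, SqInt ν fun κ => u κ j

/-- Membership in `L²_∇(ν)`, the closure in the `L²_vec(ν)` norm of gradients of
local functions. -/
def MemGradClos (ν : Measure (Cfg d)) (u : Cfg d → Fin d → ℝ) : Prop :=
  ∀ δ : ℝ, 0 < δ → ∃ h : Cfg d → ℝ, IsLocal h ∧ Measurable h ∧
    ∫⁻ κ, ENNReal.ofReal (∑ j, κ (0, j) * (u κ j - grad h κ j) ^ 2) ∂ν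
      < ENNReal.ofReal δ

/-- The extension of a vector field to negative directions: `u(κ,-b) = -u(τ_{-b}κ, b)`.
A signed step is a pair `(j, s)` with `s = true` for `+ê_j`, `false` for `-ê_j`. -/
def uExt (u : Cfg d → Fin d → ℝ) (κ : Cfg d) (s : Fin d × Bool) : ℝ :=
  if s.2 then u κ s.1 else -u (shf (-sv s.1 1) κ) s.1

/-- The lattice displacement of a signed step. -/
def stepOf (s : Fin d × Bool) : Fin d → ℤ :=
  if s.2 then sv s.1 1 else -sv s.1 1

/-- The sum of a vector field along a nearest-neighbor path started at the origin,
written in environment coordinates. -/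
def pathSum (u : Cfg d → Fin d → ℝ) : Cfg d → List (Fin d × Bool) → ℝ
  | _, [] => 0
  | κ, s :: r => uExt u κ s + pathSum u (shf (stepOf s) κ) r

/-- The cycle condition: the sum of the field along every closed nearest-neighbor
loop vanishes. -/
def CycleCond (u : Cfg d → Fin d → ℝ) (κ : Cfg d) : Prop :=
  ∀ ℓ : List (Fin d × Bool), (ℓ.map stepOf).sum = 0 → pathSum u κ ℓ = 0

/-- The divergence `(Lu)(κ) = Σ_b [κ_b u(κ,b) - (τ_{-b}κ)_b u(τ_{-b}κ,b)]`. -/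
def divg (u : Cfg d → Fin d → ℝ) (κ : Cfg d) : ℝ :=
  ∑ j, (κ (0, j) * u κ j
    - shf (-sv j 1) κ (0, j) * u (shf (-sv j 1) κ) j)

/-!
Write `J_j(κ) = κ_{(0,j)} u(κ, j)` for the flux through the edge `(0, ê_j)`, so that
`Lu = Σ_j (J_j - J_j ∘ τ_{-ê_j})`. By translation invariance
`E[J_j · h ∘ τ_{ê_j}] = E[J_j ∘ τ_{-ê_j} · h]`, so summation by parts gives
`(u, ∇h) = -E[h · Lu]` for every square-integrable `h`; ellipticity makes every term
integrable. It remains to see that `Lu` is determined by its integrals against local functions: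
indicators of cylinder sets are local, and cylinder sets form a π-system generating the
σ-algebra.
-/

theorem MeasureTheory.Integrable.ae_eq_zero_of_forall_setIntegral_eq_zero_of_isPiSystem
    {α E : Type*} [m : MeasurableSpace α] [NormedAddCommGroup E] [NormedSpace ℝ E]
    [CompleteSpace E] {μ : Measure α} {s : Set (Set α)} {f : α → E} (hf : Integrable f μ)
    (h_eq : m = MeasurableSpace.generateFrom s) (h_inter : IsPiSystem s)
    (h_univ : Set.univ ∈ s) (basic : ∀ t ∈ s, ∫ x in t, f x ∂μ = 0) :
    f =ᵐ[μ] 0 := by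
  have h_total : ∫ x, f x ∂μ = 0 := by rw [← setIntegral_univ]; exact basic _ h_univ
  suffices ∀ t, MeasurableSet t → ∫ x in t, f x ∂μ = 0 from
    hf.ae_eq_zero_of_forall_setIntegral_eq_zero fun t ht _ => this t ht
  intro t ht
  induction t, ht using MeasurableSpace.induction_on_inter h_eq h_inter with
  | empty => simp
  | basic t ht => exact basic t ht
  | compl t ht iht =>
    have h_split := integral_add_compl ht hf
    rwa [iht, zero_add, h_total] at h_split
  | iUnion g g_disj g_meas hg => simp [integral_iUnion g_meas g_disj hf.integrableOn, hg]

theorem sqInt_iff_memLp {ν : Measure (Cfg d)} {h : Cfg d → ℝ} (hm : Measurable h) :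
    SqInt ν h ↔ MemLp h 2 ν := by
  rw [memLp_two_iff_integrable_sq hm.aestronglyMeasurable, Integrable,
    hasFiniteIntegral_iff_ofReal (ae_of_all _ fun κ => sq_nonneg (h κ)), SqInt]
  exact ⟨fun hs => ⟨(hm.pow_const 2).aestronglyMeasurable, hs⟩, And.right⟩

theorem isLocal_comp_restrict (S : Finset (EdgeZ d)) (φ : (S → ℝ) → ℝ) :
    IsLocal (φ ∘ S.restrict) :=
  ⟨S, fun _ _ h => congrArg φ (funext fun e => h e e.2)⟩

theorem isLocal_indicator_cylinder (S : Finset (EdgeZ d)) (B : Set (S → ℝ)) :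
    IsLocal ((cylinder S B).indicator (1 : Cfg d → ℝ)) := by
  have : (cylinder S B).indicator (1 : Cfg d → ℝ) = B.indicator 1 ∘ S.restrict :=
    funext fun _ => Set.indicator_comp_right (g := 1) S.restrict
  rw [this]
  exact isLocal_comp_restrict S _

theorem ae_eq_zero_of_forall_integral_local_mul_eq_zero {ν : Measure (Cfg d)}
    [IsFiniteMeasure ν] {f : Cfg d → ℝ} (hf : Integrable f ν)
    (hloc : ∀ h, IsLocal h → Measurable h → SqInt ν h → ∫ κ, h κ * f κ ∂ν = 0) :
    f =ᵐ[ν] 0 := by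
  refine hf.ae_eq_zero_of_forall_setIntegral_eq_zero_of_isPiSystem
    generateFrom_measurableCylinders.symm isPiSystem_measurableCylinders
    (univ_mem_measurableCylinders _) fun t ht => ?_
  obtain ⟨S, B, hB, rfl⟩ := (mem_measurableCylinders t).mp ht
  have hcyl : MeasurableSet (cylinder S B) :=
    MeasurableSet.cylinder (α := fun _ : EdgeZ d => ℝ) S hB
  have hind : Measurable ((cylinder S B).indicator (1 : Cfg d → ℝ)) :=
    measurable_one.indicator hcyl
  have h0 := hloc _ (isLocal_indicator_cylinder S B) hind
    ((sqInt_iff_memLp hind).mpr ((memLp_const 1).indicator hcyl))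
  simp only [← Set.indicator_mul_left, Pi.one_apply, one_mul] at h0
  rwa [integral_indicator hcyl] at h0

theorem shf_shf (x y : Fin d → ℤ) (κ : Cfg d) : shf x (shf y κ) = shf (x + y) κ := by
  funext e
  simp [shf, add_assoc]

theorem shf_zero (κ : Cfg d) : shf 0 κ = κ := by
  funext e
  simp [shf]

theorem measurable_shf (x : Fin d → ℤ) : Measurable (shf x : Cfg d → Cfg d) :=
  measurable_pi_lambda _ fun _ => measurable_pi_apply _

def shfEquiv (x : Fin d → ℤ) : Cfg d ≃ᵐ Cfg d where
  toFun := shf x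
  invFun := shf (-x)
  left_inv κ := by rw [shf_shf, neg_add_cancel, shf_zero]
  right_inv κ := by rw [shf_shf, add_neg_cancel, shf_zero]
  measurable_toFun := measurable_shf x
  measurable_invFun := measurable_shf (-x)

namespace TInv

variable {ν : Measure (Cfg d)}

theorem measurePreserving_shf (hTI : TInv ν) (x : Fin d → ℤ) :
    MeasurePreserving (shf x) ν ν :=
  ⟨measurable_shf x, hTI x⟩

theorem memLp_comp_shf (hTI : TInv ν) {p : ℝ≥0∞} {f : Cfg d → ℝ} (hf : MemLp f p ν)
    (x : Fin d → ℤ) :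
    MemLp (fun κ => f (shf x κ)) p ν :=
  hf.comp_measurePreserving (hTI.measurePreserving_shf x)

theorem integral_mul_comp_shf (hTI : TInv ν) (f g : Cfg d → ℝ) (x : Fin d → ℤ) :
    ∫ κ, f κ * g (shf x κ) ∂ν = ∫ κ, f (shf (-x) κ) * g κ ∂ν := by
  conv_rhs => rw [← (hTI.measurePreserving_shf x).integral_comp' (f := shfEquiv x)]
  simp only [shfEquiv, MeasurableEquiv.coe_mk, Equiv.coe_fn_mk, shf_shf, neg_add_cancel,
    shf_zero]

theorem integral_mul_sub_comp_shf (hTI : TInv ν) {f g : Cfg d → ℝ} (hf : MemLp f 2 ν)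
    (hg : MemLp g 2 ν) (x : Fin d → ℤ) :
    ∫ κ, f κ * (g (shf x κ) - g κ) ∂ν = -∫ κ, g κ * (f κ - f (shf (-x) κ)) ∂ν := by
  have hfg : Integrable (fun κ => f κ * g κ) ν := hf.integrable_mul hg
  have hfgx : Integrable (fun κ => f κ * g (shf x κ)) ν :=
    hf.integrable_mul (hTI.memLp_comp_shf hg x)
  have hfxg : Integrable (fun κ => f (shf (-x) κ) * g κ) ν :=
    (hTI.memLp_comp_shf hf (-x)).integrable_mul hg
  calc ∫ κ, f κ * (g (shf x κ) - g κ) ∂ν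
      = ∫ κ, f κ * g (shf x κ) ∂ν - ∫ κ, f κ * g κ ∂ν := by
        rw [← integral_sub hfgx hfg]
        simp only [mul_sub]
    _ = ∫ κ, f (shf (-x) κ) * g κ ∂ν - ∫ κ, f κ * g κ ∂ν := by
        rw [hTI.integral_mul_comp_shf]
    _ = -∫ κ, g κ * (f κ - f (shf (-x) κ)) ∂ν := by
        rw [← integral_sub hfxg hfg, ← integral_neg]
        congr 1
        ext κ
        ring

end TInv

theorem Elliptic.exists_ae_norm_le {ν : Measure (Cfg d)} (hEll : Elliptic ν) :
    ∃ C, ∀ᵐ κ ∂ν, ∀ e, ‖κ e‖ ≤ C := by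
  obtain ⟨ε, hε, hae⟩ := hEll
  refine ⟨1 / ε, hae.mono fun κ hκ e => ?_⟩
  rw [Real.norm_of_nonneg (hε.le.trans (hκ e).1)]
  exact (hκ e).2

def flux (u : Cfg d → Fin d → ℝ) (j : Fin d) (κ : Cfg d) : ℝ := κ (0, j) * u κ j

theorem divg_eq_sum_flux (u : Cfg d → Fin d → ℝ) (κ : Cfg d) :
    divg u κ = ∑ j, (flux u j κ - flux u j (shf (-sv j 1) κ)) := rfl

theorem memLp_flux {ν : Measure (Cfg d)} {p : ℝ≥0∞} {u : Cfg d → Fin d → ℝ} {j : Fin d}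
    {C : ℝ} (hC : ∀ᵐ κ ∂ν, ‖κ (0, j)‖ ≤ C) (hu : MemLp (fun κ => u κ j) p ν) :
    MemLp (flux u j) p ν := by
  refine hu.of_le_mul (c := C) ((measurable_pi_apply _).aestronglyMeasurable.mul hu.1) ?_
  filter_upwards [hC] with κ hκ
  rw [flux, norm_mul]
  exact mul_le_mul_of_nonneg_right hκ (norm_nonneg _)

theorem memLp_divg {ν : Measure (Cfg d)} (hTI : TInv ν) {p : ℝ≥0∞} {u : Cfg d → Fin d → ℝ}
    (hflux : ∀ j, MemLp (flux u j) p ν) : MemLp (divg u) p ν :=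
  memLp_finsetSum _ fun j _ => (hflux j).sub (hTI.memLp_comp_shf (hflux j) _)

theorem ivec_grad_eq_neg_integral_mul_divg {ν : Measure (Cfg d)} (hTI : TInv ν)
    {u : Cfg d → Fin d → ℝ} (hflux : ∀ j, MemLp (flux u j) 2 ν) {h : Cfg d → ℝ}
    (hh : MemLp h 2 ν) : ivec ν u (grad h) = -∫ κ, h κ * divg u κ ∂ν := by
  have hint : ∀ j, Integrable (fun κ => flux u j κ * (h (shf (sv j 1) κ) - h κ)) ν :=
    fun j => (hflux j).integrable_mul ((hTI.memLp_comp_shf hh _).sub hh)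
  have hint' : ∀ j,
      Integrable (fun κ => h κ * (flux u j κ - flux u j (shf (-sv j 1) κ))) ν :=
    fun j => hh.integrable_mul ((hflux j).sub (hTI.memLp_comp_shf (hflux j) _))
  calc ivec ν u (grad h)
      = ∑ j, ∫ κ, flux u j κ * (h (shf (sv j 1) κ) - h κ) ∂ν := by
        rw [ivec, ← integral_finsetSum _ fun j _ => hint j]
        rfl
    _ = ∑ j, -∫ κ, h κ * (flux u j κ - flux u j (shf (-sv j 1) κ)) ∂ν :=
        Finset.sum_congr rfl fun j _ => hTI.integral_mul_sub_comp_shf (hflux j) hh _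
    _ = -∫ κ, h κ * divg u κ ∂ν := by
        rw [Finset.sum_neg_distrib, ← integral_finsetSum _ fun j _ => hint' j]
        simp only [divg_eq_sum_flux, Finset.mul_sum]

/-- Lemma on divergence-free fields.
A vector field `u ∈ L²_vec(ν)` is orthogonal to `L²_∇(ν)` (equivalently, to every
gradient of a square-integrable local function) if and only if its divergence
vanishes `ν`-almost surely. -/
theorem orthogonal_iff_divergence_free
    (ν : Measure (Cfg d)) [IsProbabilityMeasure ν]
    (hTI : TInv ν) (hEll : Elliptic ν)
    (u : Cfg d → Fin d → ℝ) (hu : MemL2vec ν u) :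
    (∀ h : Cfg d → ℝ, IsLocal h → Measurable h → SqInt ν h →
        ivec ν u (grad h) = 0)
      ↔ (∀ᵐ κ ∂ν, divg u κ = 0) := by
  obtain ⟨C, hC⟩ := hEll.exists_ae_norm_le
  have hflux : ∀ j, MemLp (flux u j) 2 ν := fun j =>
    memLp_flux (hC.mono fun κ hκ => hκ (0, j)) ((sqInt_iff_memLp (hu.1 j)).mp (hu.2 j))
  have ibp : ∀ h, Measurable h → SqInt ν h → ivec ν u (grad h) = -∫ κ, h κ * divg u κ ∂ν :=
    fun h hm hs => ivec_grad_eq_neg_integral_mul_divg hTI hflux ((sqInt_iff_memLp hm).mp hs)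
  constructor
  · intro horth
    refine ae_eq_zero_of_forall_integral_local_mul_eq_zero
      ((memLp_divg hTI hflux).integrable one_le_two) fun h hl hm hs => ?_
    simpa [ibp h hm hs] using horth h hl hm hs
  · intro hdiv h _ hm hs
    rw [ibp h hm hs, neg_eq_zero]
    exact integral_eq_zero_of_ae (hdiv.mono fun κ hκ => by simp [hκ])
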